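/- The coefficient b := ∫ ⟨∇ψ(x), ∇h_α(x)⟩ π(dx) admits the sensitivity-process representation b = Σ_{t=0}^∞ α^t ∫ 𝔼[ ⟨∇ψ(x), S_t(x, ·)ᵀ ∇c(F_t(x, ·))⟩ ] π(dx), where both the integral on the left and the series on the right converge absolutely. -/

import Mathlib

/-!
Each `F_t(·, ω)` is C¹ with `‖S_t‖ ≤ L^t` by the chain rule, so the pathwise derivative
`∇c(F_t)ᵀ S_t` of `c ∘ F_t` is bounded by `C L^t`. Differentiating under `𝔼` (dominated by
`C L^t`) and then termwise in the series (dominated by `C (αL)^t`, summable as `αL < 1`) gives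
`⟨v, ∇h_α(x)⟩ = Σ_t α^t 𝔼⟨v, S_tᵀ ∇c(F_t)⟩` for every `v`. With `v = ∇ψ(x)` the `t`-th term is
bounded by `C C' (αL)^t` uniformly in `x`, which makes the series integrable and lets it be
integrated term by term against `π`. Measurability in `x` is automatic: `x ↦ 𝔼[D(c ∘ F_t)(x)]`
is itself a derivative, and derivatives are Borel measurable.
-/

open MeasureTheory

/-- The random flow driven by noise `N`: `rflow a N 0 x ω = x`,
`rflow a N (s+1) x ω = a (rflow a N s x ω) (N (s+1) ω)`. -/
def rflow {E M Ω : Type*} (a : E → M → E) (N : ℕ → Ω → M) : ℕ → E → Ω → E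
  | 0 => fun x _ => x
  | s + 1 => fun x ω => a (rflow a N s x ω) (N (s + 1) ω)

open InnerProductSpace

theorem measurable_rflow {E M Ω : Type*} [MeasurableSpace E] [MeasurableSpace M]
    [MeasurableSpace Ω] {a : E → M → E} {N : ℕ → Ω → M}
    (hameas : Measurable fun p : E × M => a p.1 p.2) (hN : ∀ s, Measurable (N s)) (x : E) :
    ∀ t, Measurable fun ω => rflow a N t x ω
  | 0 => measurable_const
  | t + 1 => hameas.comp ((measurable_rflow hameas hN x t).prodMk (hN _))

section Flow

variable {E M Ω : Type*} [NormedAddCommGroup E] [NormedSpace ℝ E]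
  {a : E → M → E} {N : ℕ → Ω → M} {c : E → ℝ} {L C : ℝ}

theorem differentiable_rflow (hadiff : ∀ n, Differentiable ℝ fun x => a x n) (ω : Ω) :
    ∀ t, Differentiable ℝ fun x => rflow a N t x ω
  | 0 => differentiable_id
  | t + 1 => (hadiff _).comp (differentiable_rflow hadiff ω t)

theorem fderiv_rflow_zero (ω : Ω) (x : E) :
    fderiv ℝ (fun y => rflow a N 0 y ω) x = ContinuousLinearMap.id ℝ E :=
  fderiv_id

theorem fderiv_rflow_succ (hadiff : ∀ n, Differentiable ℝ fun x => a x n) (t : ℕ) (ω : Ω) (x : E) :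
    fderiv ℝ (fun y => rflow a N (t + 1) y ω) x =
      (fderiv ℝ (fun y => a y (N (t + 1) ω)) (rflow a N t x ω)).comp
        (fderiv ℝ (fun y => rflow a N t y ω) x) :=
  fderiv_comp x (hadiff _ _) (differentiable_rflow hadiff ω t x)

theorem norm_fderiv_rflow_le (hadiff : ∀ n, Differentiable ℝ fun x => a x n)
    (hL : ∀ x n, ‖fderiv ℝ (fun y => a y n) x‖ ≤ L) (ω : Ω) (x : E) :
    ∀ t, ‖fderiv ℝ (fun y => rflow a N t y ω) x‖ ≤ L ^ t
  | 0 => by simpa only [fderiv_rflow_zero, pow_zero] using ContinuousLinearMap.norm_id_le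
  | t + 1 => by
    rw [fderiv_rflow_succ hadiff, pow_succ']
    exact (ContinuousLinearMap.opNorm_comp_le _ _).trans <| mul_le_mul (hL _ _)
      (norm_fderiv_rflow_le hadiff hL ω x t) (norm_nonneg _)
      ((norm_nonneg _).trans (hL x (N (t + 1) ω)))

theorem fderiv_comp_rflow (hadiff : ∀ n, Differentiable ℝ fun x => a x n) (hc : Differentiable ℝ c)
    (t : ℕ) (ω : Ω) (x : E) :
    fderiv ℝ (fun y => c (rflow a N t y ω)) x =
      (fderiv ℝ c (rflow a N t x ω)).comp (fderiv ℝ (fun y => rflow a N t y ω) x) :=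
  fderiv_comp x (hc _) (differentiable_rflow hadiff ω t x)

theorem norm_fderiv_comp_rflow_le (hadiff : ∀ n, Differentiable ℝ fun x => a x n)
    (hL : ∀ x n, ‖fderiv ℝ (fun y => a y n) x‖ ≤ L) (hc : Differentiable ℝ c)
    (hcC : ∀ y, ‖fderiv ℝ c y‖ ≤ C) (t : ℕ) (ω : Ω) (x : E) :
    ‖fderiv ℝ (fun y => c (rflow a N t y ω)) x‖ ≤ C * L ^ t := by
  rw [fderiv_comp_rflow hadiff hc]
  exact (ContinuousLinearMap.opNorm_comp_le _ _).trans <| mul_le_mul (hcC _)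
    (norm_fderiv_rflow_le hadiff hL ω x t) (norm_nonneg _) ((norm_nonneg _).trans (hcC x))

variable [MeasurableSpace E] [MeasurableSpace M] [MeasurableSpace Ω] [FiniteDimensional ℝ E]

theorem measurable_fderiv_rflow (hameas : Measurable fun p : E × M => a p.1 p.2)
    (hDmeas : Measurable fun p : E × M => fderiv ℝ (fun x => a x p.2) p.1)
    (hN : ∀ s, Measurable (N s)) (hadiff : ∀ n, Differentiable ℝ fun x => a x n) (x : E) :
    ∀ t, Measurable fun ω => fderiv ℝ (fun y => rflow a N t y ω) x
  | 0 => by simpa only [fderiv_rflow_zero] using measurable_const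
  | t + 1 => by
    simp_rw [fderiv_rflow_succ hadiff]
    exact (continuous_fst.clm_comp continuous_snd).measurable2
      (hDmeas.comp ((measurable_rflow hameas hN x t).prodMk (hN _)))
      (measurable_fderiv_rflow hameas hDmeas hN hadiff x t)

variable [BorelSpace E]

theorem measurable_fderiv_comp_rflow (hameas : Measurable fun p : E × M => a p.1 p.2)
    (hDmeas : Measurable fun p : E × M => fderiv ℝ (fun x => a x p.2) p.1)
    (hN : ∀ s, Measurable (N s)) (hadiff : ∀ n, Differentiable ℝ fun x => a x n)
    (hc : Differentiable ℝ c) (t : ℕ) (x : E) :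
    Measurable fun ω => fderiv ℝ (fun y => c (rflow a N t y ω)) x := by
  simp_rw [fderiv_comp_rflow hadiff hc]
  exact (continuous_fst.clm_comp continuous_snd).measurable2
    ((measurable_fderiv ℝ c).comp (measurable_rflow hameas hN x t))
    (measurable_fderiv_rflow hameas hDmeas hN hadiff x t)

end Flow

section Expectation

variable {E M Ω : Type*} [NormedAddCommGroup E] [NormedSpace ℝ E] [MeasurableSpace Ω]
  {ℙ : Measure Ω} {a : E → M → E} {N : ℕ → Ω → M} {c : E → ℝ} {L B C : ℝ}

theorem norm_smul_integral_fderiv_comp_rflow_le [IsProbabilityMeasure ℙ]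
    (hadiff : ∀ n, Differentiable ℝ fun x => a x n)
    (hL : ∀ x n, ‖fderiv ℝ (fun y => a y n) x‖ ≤ L) (hc : Differentiable ℝ c)
    (hcC : ∀ y, ‖fderiv ℝ c y‖ ≤ C) {α : ℝ} (hα : 0 ≤ α) (t : ℕ) (x : E) :
    ‖α ^ t • ∫ ω, fderiv ℝ (fun y => c (rflow a N t y ω)) x ∂ℙ‖ ≤ C * (α * L) ^ t := by
  have h := norm_integral_le_of_norm_le_const (μ := ℙ)
    (ae_of_all _ fun ω => norm_fderiv_comp_rflow_le (N := N) hadiff hL hc hcC t ω x)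
  rw [probReal_univ, mul_one] at h
  rw [norm_smul, norm_pow, Real.norm_of_nonneg hα, mul_pow, mul_left_comm]
  gcongr

variable [FiniteDimensional ℝ E] [MeasurableSpace E] [BorelSpace E] [MeasurableSpace M]

theorem integrable_fderiv_comp_rflow [IsFiniteMeasure ℙ]
    (hameas : Measurable fun p : E × M => a p.1 p.2)
    (hDmeas : Measurable fun p : E × M => fderiv ℝ (fun x => a x p.2) p.1)
    (hN : ∀ s, Measurable (N s)) (hadiff : ∀ n, Differentiable ℝ fun x => a x n)
    (hL : ∀ x n, ‖fderiv ℝ (fun y => a y n) x‖ ≤ L) (hc : Differentiable ℝ c)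
    (hcC : ∀ y, ‖fderiv ℝ c y‖ ≤ C) (t : ℕ) (x : E) :
    Integrable (fun ω => fderiv ℝ (fun y => c (rflow a N t y ω)) x) ℙ :=
  .of_bound (measurable_fderiv_comp_rflow hameas hDmeas hN hadiff hc t x).aestronglyMeasurable
    (C * L ^ t) (ae_of_all _ fun ω => norm_fderiv_comp_rflow_le hadiff hL hc hcC t ω x)

theorem hasFDerivAt_integral_comp_rflow [IsFiniteMeasure ℙ]
    (hameas : Measurable fun p : E × M => a p.1 p.2)
    (hDmeas : Measurable fun p : E × M => fderiv ℝ (fun x => a x p.2) p.1)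
    (hN : ∀ s, Measurable (N s)) (hadiff : ∀ n, Differentiable ℝ fun x => a x n)
    (hL : ∀ x n, ‖fderiv ℝ (fun y => a y n) x‖ ≤ L) (hc : Differentiable ℝ c)
    (hcB : ∀ y, ‖c y‖ ≤ B) (hcC : ∀ y, ‖fderiv ℝ c y‖ ≤ C) (t : ℕ) (x₀ : E) :
    HasFDerivAt (fun x => ∫ ω, c (rflow a N t x ω) ∂ℙ)
      (∫ ω, fderiv ℝ (fun y => c (rflow a N t y ω)) x₀ ∂ℙ) x₀ := by
  have hF_meas : ∀ x, AEStronglyMeasurable (fun ω => c (rflow a N t x ω)) ℙ := fun x =>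
    (hc.continuous.measurable.comp (measurable_rflow hameas hN x t)).aestronglyMeasurable
  exact hasFDerivAt_integral_of_dominated_of_fderiv_le (bound := fun _ => C * L ^ t)
    Filter.univ_mem (.of_forall hF_meas) (.of_bound (hF_meas x₀) B (ae_of_all _ fun _ => hcB _))
    (integrable_fderiv_comp_rflow hameas hDmeas hN hadiff hL hc hcC t x₀).aestronglyMeasurable
    (ae_of_all _ fun ω x _ => norm_fderiv_comp_rflow_le hadiff hL hc hcC t ω x)
    (integrable_const _)
    (ae_of_all _ fun ω x _ => (hc.comp (differentiable_rflow hadiff ω t) x).hasFDerivAt)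

theorem measurable_integral_fderiv_comp_rflow [IsFiniteMeasure ℙ]
    (hameas : Measurable fun p : E × M => a p.1 p.2)
    (hDmeas : Measurable fun p : E × M => fderiv ℝ (fun x => a x p.2) p.1)
    (hN : ∀ s, Measurable (N s)) (hadiff : ∀ n, Differentiable ℝ fun x => a x n)
    (hL : ∀ x n, ‖fderiv ℝ (fun y => a y n) x‖ ≤ L) (hc : Differentiable ℝ c)
    (hcB : ∀ y, ‖c y‖ ≤ B) (hcC : ∀ y, ‖fderiv ℝ c y‖ ≤ C) (t : ℕ) :
    Measurable fun x => ∫ ω, fderiv ℝ (fun y => c (rflow a N t y ω)) x ∂ℙ := by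
  have h : (fun x => ∫ ω, fderiv ℝ (fun y => c (rflow a N t y ω)) x ∂ℙ) =
      fderiv ℝ (fun x => ∫ ω, c (rflow a N t x ω) ∂ℙ) := funext fun x =>
    (hasFDerivAt_integral_comp_rflow hameas hDmeas hN hadiff hL hc hcB hcC t x).fderiv.symm
  rw [h]
  exact measurable_fderiv ℝ _

theorem hasFDerivAt_tsum_discounted [Nonempty M] [IsProbabilityMeasure ℙ]
    (hameas : Measurable fun p : E × M => a p.1 p.2)
    (hDmeas : Measurable fun p : E × M => fderiv ℝ (fun x => a x p.2) p.1)
    (hN : ∀ s, Measurable (N s)) (hadiff : ∀ n, Differentiable ℝ fun x => a x n)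
    (hL : ∀ x n, ‖fderiv ℝ (fun y => a y n) x‖ ≤ L) (hc : Differentiable ℝ c)
    (hcB : ∀ y, ‖c y‖ ≤ B) (hcC : ∀ y, ‖fderiv ℝ c y‖ ≤ C) {α : ℝ} (hα₀ : 0 ≤ α)
    (hα₁ : α < 1) (hαL : α * L < 1) (x : E) :
    HasFDerivAt (fun x => ∑' t : ℕ, α ^ t * ∫ ω, c (rflow a N t x ω) ∂ℙ)
      (∑' t : ℕ, α ^ t • ∫ ω, fderiv ℝ (fun y => c (rflow a N t y ω)) x ∂ℙ) x := by
  have hL₀ : 0 ≤ L := (norm_nonneg _).trans (hL x (Classical.arbitrary M))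
  refine hasFDerivAt_tsum
    ((summable_geometric_of_lt_one (mul_nonneg hα₀ hL₀) hαL).mul_left C)
    (fun t y =>
      (hasFDerivAt_integral_comp_rflow hameas hDmeas hN hadiff hL hc hcB hcC t y).const_mul _)
    (fun t y => norm_smul_integral_fderiv_comp_rflow_le hadiff hL hc hcC hα₀ t y) ?_ x (x₀ := x)
  refine .of_norm_bounded ((summable_geometric_of_lt_one hα₀ hα₁).mul_left B) fun t => ?_
  have h := norm_integral_le_of_norm_le_const (μ := ℙ)
    (ae_of_all _ fun ω => hcB (rflow a N t x ω))
  rw [probReal_univ, mul_one] at h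
  rw [norm_mul, norm_pow, Real.norm_of_nonneg hα₀, mul_comm]
  gcongr

end Expectation

section Gradient

variable {E F : Type*} [NormedAddCommGroup E] [InnerProductSpace ℝ E] [CompleteSpace E]

theorem inner_adjoint_fderiv_gradient [NormedAddCommGroup F] [InnerProductSpace ℝ F]
    [CompleteSpace F] {f : E → F} {g : F → ℝ} {x : E} (hg : DifferentiableAt ℝ g (f x))
    (hf : DifferentiableAt ℝ f x) (v : E) :
    inner ℝ v (ContinuousLinearMap.adjoint (fderiv ℝ f x) (gradient g (f x))) =
      fderiv ℝ (fun y => g (f y)) x v := by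
  rw [ContinuousLinearMap.adjoint_inner_right, real_inner_comm, inner_gradient_left,
    fderiv_fun_comp x hg hf, ContinuousLinearMap.comp_apply]

theorem measurable_gradient [MeasurableSpace E] [BorelSpace E] [FiniteDimensional ℝ E]
    (f : E → ℝ) : Measurable (gradient f) :=
  (toDual ℝ E).symm.continuous.measurable.comp (measurable_fderiv ℝ f)

end Gradient

section Series

variable {X G : Type*} [MeasurableSpace X] {μ : Measure X} [IsFiniteMeasure μ]
  [NormedAddCommGroup G] {f : ℕ → X → G} {u : ℕ → ℝ}

theorem integrable_tsum_of_norm_le [CompleteSpace G] (hf : ∀ t, AEStronglyMeasurable (f t) μ)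
    (hu : Summable u) (hfu : ∀ t x, ‖f t x‖ ≤ u t) : Integrable (fun x => ∑' t, f t x) μ := by
  have hsum : ∀ x, HasSum (fun t => f t x) (∑' t, f t x) := fun x =>
    (Summable.of_norm_bounded hu (hfu · x)).hasSum
  exact .of_bound
    (aestronglyMeasurable_of_tendsto_ae _
      (fun n => Finset.aestronglyMeasurable_fun_sum _ fun t _ => hf t)
      (ae_of_all _ fun x => (hsum x).tendsto_sum_nat))
    (∑' t, u t) (ae_of_all _ fun x => tsum_of_norm_bounded hu.hasSum (hfu · x))

variable [NormedSpace ℝ G]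

theorem summable_norm_integral_of_norm_le (hu : Summable u) (hfu : ∀ t x, ‖f t x‖ ≤ u t) :
    Summable fun t => ‖∫ x, f t x ∂μ‖ :=
  (hu.mul_right _).of_nonneg_of_le (fun _ => norm_nonneg _)
    fun t => norm_integral_le_of_norm_le_const (ae_of_all _ (hfu t))

theorem integral_tsum_of_norm_le (hf : ∀ t, AEStronglyMeasurable (f t) μ) (hu : Summable u)
    (hfu : ∀ t x, ‖f t x‖ ≤ u t) : ∫ x, ∑' t, f t x ∂μ = ∑' t, ∫ x, f t x ∂μ := by
  have hnorm : Summable fun t => ∫ x, ‖f t x‖ ∂μ :=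
    (summable_norm_integral_of_norm_le (f := fun t x => ‖f t x‖) hu (by simpa using hfu)).of_norm
  exact (integral_tsum_of_summable_integral_norm
    (fun t => .of_bound (hf t) (u t) (ae_of_all _ (hfu t))) hnorm).symm

end Series

section Sensitivity

variable {E M Ω : Type*} [NormedAddCommGroup E] [InnerProductSpace ℝ E] [FiniteDimensional ℝ E]
  [MeasurableSpace E] [BorelSpace E] [MeasurableSpace M] [MeasurableSpace Ω] {ℙ : Measure Ω}
  {a : E → M → E} {N : ℕ → Ω → M} {c : E → ℝ} {L B C α : ℝ}

theorem smul_integral_fderiv_comp_rflow_apply [IsFiniteMeasure ℙ]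
    (hameas : Measurable fun p : E × M => a p.1 p.2)
    (hDmeas : Measurable fun p : E × M => fderiv ℝ (fun x => a x p.2) p.1)
    (hN : ∀ s, Measurable (N s)) (hadiff : ∀ n, Differentiable ℝ fun x => a x n)
    (hL : ∀ x n, ‖fderiv ℝ (fun y => a y n) x‖ ≤ L) (hc : Differentiable ℝ c)
    (hcC : ∀ y, ‖fderiv ℝ c y‖ ≤ C) (t : ℕ) (x v : E) :
    (α ^ t • ∫ ω, fderiv ℝ (fun y => c (rflow a N t y ω)) x ∂ℙ) v =
      α ^ t * ∫ ω, inner ℝ v (ContinuousLinearMap.adjoint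
        (fderiv ℝ (fun y => rflow a N t y ω) x) (gradient c (rflow a N t x ω))) ∂ℙ := by
  rw [smul_apply, smul_eq_mul, ContinuousLinearMap.integral_apply
    (integrable_fderiv_comp_rflow hameas hDmeas hN hadiff hL hc hcC t x)]
  exact congrArg _ <| integral_congr_ae <| ae_of_all _ fun ω =>
    (inner_adjoint_fderiv_gradient (hc _) (differentiable_rflow hadiff ω t x) v).symm

theorem norm_mul_integral_inner_adjoint_le [IsProbabilityMeasure ℙ]
    (hameas : Measurable fun p : E × M => a p.1 p.2)
    (hDmeas : Measurable fun p : E × M => fderiv ℝ (fun x => a x p.2) p.1)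
    (hN : ∀ s, Measurable (N s)) (hadiff : ∀ n, Differentiable ℝ fun x => a x n)
    (hL : ∀ x n, ‖fderiv ℝ (fun y => a y n) x‖ ≤ L) (hc : Differentiable ℝ c)
    (hcC : ∀ y, ‖fderiv ℝ c y‖ ≤ C) (hα : 0 ≤ α) (t : ℕ) (x v : E) :
    ‖α ^ t * ∫ ω, inner ℝ v (ContinuousLinearMap.adjoint
        (fderiv ℝ (fun y => rflow a N t y ω) x) (gradient c (rflow a N t x ω))) ∂ℙ‖ ≤
      C * (α * L) ^ t * ‖v‖ := by
  rw [← smul_integral_fderiv_comp_rflow_apply hameas hDmeas hN hadiff hL hc hcC]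
  exact ContinuousLinearMap.le_of_opNorm_le _
    (norm_smul_integral_fderiv_comp_rflow_le hadiff hL hc hcC hα t x) v

theorem measurable_mul_integral_inner_adjoint [IsFiniteMeasure ℙ]
    (hameas : Measurable fun p : E × M => a p.1 p.2)
    (hDmeas : Measurable fun p : E × M => fderiv ℝ (fun x => a x p.2) p.1)
    (hN : ∀ s, Measurable (N s)) (hadiff : ∀ n, Differentiable ℝ fun x => a x n)
    (hL : ∀ x n, ‖fderiv ℝ (fun y => a y n) x‖ ≤ L) (hc : Differentiable ℝ c)
    (hcB : ∀ y, ‖c y‖ ≤ B) (hcC : ∀ y, ‖fderiv ℝ c y‖ ≤ C) {g : E → E} (hg : Measurable g)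
    (t : ℕ) :
    Measurable fun x => α ^ t * ∫ ω, inner ℝ (g x) (ContinuousLinearMap.adjoint
      (fderiv ℝ (fun y => rflow a N t y ω) x) (gradient c (rflow a N t x ω))) ∂ℙ := by
  simp_rw [← smul_integral_fderiv_comp_rflow_apply hameas hDmeas hN hadiff hL hc hcC]
  exact (continuous_fst.clm_apply continuous_snd).measurable2
    ((measurable_integral_fderiv_comp_rflow hameas hDmeas hN hadiff hL hc hcB hcC t).const_smul
      (α ^ t)) hg

theorem inner_gradient_tsum_discounted [Nonempty M] [IsProbabilityMeasure ℙ]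
    (hameas : Measurable fun p : E × M => a p.1 p.2)
    (hDmeas : Measurable fun p : E × M => fderiv ℝ (fun x => a x p.2) p.1)
    (hN : ∀ s, Measurable (N s)) (hadiff : ∀ n, Differentiable ℝ fun x => a x n)
    (hL : ∀ x n, ‖fderiv ℝ (fun y => a y n) x‖ ≤ L) (hc : Differentiable ℝ c)
    (hcB : ∀ y, ‖c y‖ ≤ B) (hcC : ∀ y, ‖fderiv ℝ c y‖ ≤ C) (hα₀ : 0 ≤ α) (hα₁ : α < 1)
    (hαL : α * L < 1) (x v : E) :
    inner ℝ v (gradient (fun x => ∑' t : ℕ, α ^ t * ∫ ω, c (rflow a N t x ω) ∂ℙ) x) =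
      ∑' t : ℕ, α ^ t * ∫ ω, inner ℝ v (ContinuousLinearMap.adjoint
        (fderiv ℝ (fun y => rflow a N t y ω) x) (gradient c (rflow a N t x ω))) ∂ℙ := by
  have hL₀ : 0 ≤ L := (norm_nonneg _).trans (hL x (Classical.arbitrary M))
  have hsum : Summable fun t : ℕ => α ^ t • ∫ ω, fderiv ℝ (fun y => c (rflow a N t y ω)) x ∂ℙ :=
    .of_norm_bounded ((summable_geometric_of_lt_one (mul_nonneg hα₀ hL₀) hαL).mul_left C)
      fun t => norm_smul_integral_fderiv_comp_rflow_le hadiff hL hc hcC hα₀ t x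
  rw [real_inner_comm, inner_gradient_left,
    (hasFDerivAt_tsum_discounted hameas hDmeas hN hadiff hL hc hcB hcC hα₀ hα₁ hαL x).fderiv]
  exact ((ContinuousLinearMap.apply ℝ ℝ v).map_tsum hsum).trans <|
    tsum_congr fun t =>
      smul_integral_fderiv_comp_rflow_apply hameas hDmeas hN hadiff hL hc hcC t x v

end Sensitivity

theorem coefficient_b_sensitivity_representation_general
    {Ω : Type*} [MeasurableSpace Ω] (ℙ : Measure Ω) [IsProbabilityMeasure ℙ]
    (d m : ℕ)
    (N : ℕ → Ω → Fin m → ℝ) (hN : ∀ s, Measurable (N s))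
    (L : ℝ)
    (a : EuclideanSpace ℝ (Fin d) → (Fin m → ℝ) → EuclideanSpace ℝ (Fin d))
    (hameas : Measurable fun p : EuclideanSpace ℝ (Fin d) × (Fin m → ℝ) => a p.1 p.2)
    (haC1 : ∀ n, ContDiff ℝ 1 (fun x => a x n))
    (hDmeas : Measurable fun p : EuclideanSpace ℝ (Fin d) × (Fin m → ℝ) =>
      fderiv ℝ (fun x => a x p.2) p.1)
    (hL : ∀ x n, ‖fderiv ℝ (fun y => a y n) x‖ ≤ L)
    (c : EuclideanSpace ℝ (Fin d) → ℝ) (hc : ContDiff ℝ 1 c)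
    (B : ℝ) (hcB : ∀ y, |c y| ≤ B)
    (C : ℝ) (hcC : ∀ y, ‖gradient c y‖ ≤ C)
    (α : ℝ) (hα : α ∈ Set.Ioo (0 : ℝ) 1) (hαL : α * L < 1)
    (ψ : EuclideanSpace ℝ (Fin d) → ℝ)
    (C' : ℝ) (hψC : ∀ y, ‖gradient ψ y‖ ≤ C')
    (π : Measure (EuclideanSpace ℝ (Fin d))) [IsProbabilityMeasure π] :
    Integrable (fun x => (inner ℝ (gradient ψ x)
        (gradient (fun x => ∑' t : ℕ, α ^ t * ∫ ω, c (rflow a N t x ω) ∂ℙ) x) : ℝ)) π ∧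
    Summable (fun t : ℕ => |α ^ t * ∫ x, ∫ ω, (inner ℝ (gradient ψ x)
        (ContinuousLinearMap.adjoint (fderiv ℝ (fun y => rflow a N t y ω) x)
          (gradient c (rflow a N t x ω))) : ℝ) ∂ℙ ∂π|) ∧
    (∫ x, (inner ℝ (gradient ψ x)
        (gradient (fun x => ∑' t : ℕ, α ^ t * ∫ ω, c (rflow a N t x ω) ∂ℙ) x) : ℝ) ∂π)
      = ∑' t : ℕ, α ^ t * ∫ x, ∫ ω, (inner ℝ (gradient ψ x)
          (ContinuousLinearMap.adjoint (fderiv ℝ (fun y => rflow a N t y ω) x)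
            (gradient c (rflow a N t x ω))) : ℝ) ∂ℙ ∂π := by
  have hα₀ : 0 ≤ α := hα.1.le
  have hadiff : ∀ n, Differentiable ℝ fun x => a x n := fun n =>
    (haC1 n).differentiable one_ne_zero
  have hcdiff : Differentiable ℝ c := hc.differentiable one_ne_zero
  have hDcC : ∀ y, ‖fderiv ℝ c y‖ ≤ C := fun y => by
    simpa only [gradient, LinearIsometryEquiv.norm_map] using hcC y
  have hαL₀ : 0 ≤ α * L := mul_nonneg hα₀ ((norm_nonneg _).trans (hL 0 0))
  have hC₀ : 0 ≤ C := (norm_nonneg _).trans (hcC 0)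
  set w := fun t x => α ^ t * ∫ ω, inner ℝ (gradient ψ x) (ContinuousLinearMap.adjoint
    (fderiv ℝ (fun y => rflow a N t y ω) x) (gradient c (rflow a N t x ω))) ∂ℙ with hw
  have hw_le : ∀ t x, ‖w t x‖ ≤ C * (α * L) ^ t * C' := fun t x =>
    (norm_mul_integral_inner_adjoint_le hameas hDmeas hN hadiff hL hcdiff hDcC hα₀ t x _).trans <|
      mul_le_mul_of_nonneg_left (hψC x) (mul_nonneg hC₀ (pow_nonneg hαL₀ t))
  have hw_meas : ∀ t, AEStronglyMeasurable (w t) π := fun t =>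
    (measurable_mul_integral_inner_adjoint hameas hDmeas hN hadiff hL hcdiff hcB hDcC
      (measurable_gradient ψ) t).aestronglyMeasurable
  have hu : Summable fun t : ℕ => C * (α * L) ^ t * C' :=
    ((summable_geometric_of_lt_one hαL₀ hαL).mul_left C).mul_right C'
  simp only [inner_gradient_tsum_discounted hameas hDmeas hN hadiff hL hcdiff hcB hDcC hα₀ hα.2 hαL]
  refine ⟨integrable_tsum_of_norm_le hw_meas hu hw_le, ?_, ?_⟩
  · simpa only [hw, integral_const_mul, Real.norm_eq_abs] using
      summable_norm_integral_of_norm_le (μ := π) hu hw_le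
  · rw [integral_tsum_of_norm_le hw_meas hu hw_le]
    simp only [hw, integral_const_mul]

/-- The coefficient `b = ∫ ⟨∇ψ(x), ∇h_α(x)⟩ π(dx)` admits the
sensitivity-process representation
`b = ∑_t α^t ∫ 𝔼[⟨∇ψ(x), S_t(x,·)ᵀ ∇c(F_t(x,·))⟩] π(dx)`, where the integral on the left
and the series on the right converge absolutely. -/
theorem coefficient_b_sensitivity_representation
    {Ω : Type*} [MeasurableSpace Ω] (ℙ : Measure Ω) [IsProbabilityMeasure ℙ]
    (d m : ℕ)
    (N : ℕ → Ω → Fin m → ℝ) (hN : ∀ s, Measurable (N s))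
    (L : ℝ)
    (a : EuclideanSpace ℝ (Fin d) → (Fin m → ℝ) → EuclideanSpace ℝ (Fin d))
    (hameas : Measurable fun p : EuclideanSpace ℝ (Fin d) × (Fin m → ℝ) => a p.1 p.2)
    (haC1 : ∀ n, ContDiff ℝ 1 (fun x => a x n))
    (hDmeas : Measurable fun p : EuclideanSpace ℝ (Fin d) × (Fin m → ℝ) =>
      fderiv ℝ (fun x => a x p.2) p.1)
    (hL : ∀ x n, ‖fderiv ℝ (fun y => a y n) x‖ ≤ L)
    (c : EuclideanSpace ℝ (Fin d) → ℝ) (hc : ContDiff ℝ 1 c)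
    (B : ℝ) (hcB : ∀ y, |c y| ≤ B)
    (C : ℝ) (hcC : ∀ y, ‖gradient c y‖ ≤ C)
    (α : ℝ) (hα : α ∈ Set.Ioo (0 : ℝ) 1) (hαL : α * L < 1)
    (ψ : EuclideanSpace ℝ (Fin d) → ℝ) (hψ : ContDiff ℝ 1 ψ)
    (C' : ℝ) (hψC : ∀ y, ‖gradient ψ y‖ ≤ C')
    (π : Measure (EuclideanSpace ℝ (Fin d))) [IsProbabilityMeasure π] :
    Integrable (fun x => (inner ℝ (gradient ψ x)
        (gradient (fun x => ∑' t : ℕ, α ^ t * ∫ ω, c (rflow a N t x ω) ∂ℙ) x) : ℝ)) π ∧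
    Summable (fun t : ℕ => |α ^ t * ∫ x, ∫ ω, (inner ℝ (gradient ψ x)
        (ContinuousLinearMap.adjoint (fderiv ℝ (fun y => rflow a N t y ω) x)
          (gradient c (rflow a N t x ω))) : ℝ) ∂ℙ ∂π|) ∧
    (∫ x, (inner ℝ (gradient ψ x)
        (gradient (fun x => ∑' t : ℕ, α ^ t * ∫ ω, c (rflow a N t x ω) ∂ℙ) x) : ℝ) ∂π)
      = ∑' t : ℕ, α ^ t * ∫ x, ∫ ω, (inner ℝ (gradient ψ x)
          (ContinuousLinearMap.adjoint (fderiv ℝ (fun y => rflow a N t y ω) x)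
            (gradient c (rflow a N t x ω))) : ℝ) ∂ℙ ∂π :=
  coefficient_b_sensitivity_representation_general ℙ d m N hN L a hameas haC1 hDmeas hL c hc B hcB C
    hcC α hα hαL ψ C' hψC π
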